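/- arXiv:1410.8625 — 8 statements merged into one kernel-verified Lean document; each statement's English description precedes it below -/
import Mathlib

section
/- Suppose the x-stationarity condition together with the dual update holds at steps k−1 and k (k ≥ 1). Then ‖p^{k+1} − p^k‖² ≤ (2(ℓ_f + ℓ_φ)²/μ₀)·‖x^{k+1} − x^k‖² + (2ℓ_φ²/μ₀)·‖x^k − x^{k−1}‖². -/
open scoped InnerProductSpace

/-!
Combining the dual update with the x-stationarity condition eliminates the penalty term:
`Aᵀ p^{j+1} = ∇φ(x^j) - ∇f(x^{j+1}) - ∇φ(x^{j+1})`. Subtracting this identity at `j = k` and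
`j = k - 1` expresses `Aᵀ (p^{k+1} - p^k)` through gradient differences, which the Lipschitz
bounds control; the lower bound `μ₀ ‖q‖² ≤ ‖Aᵀ q‖²` and `(a + b)² ≤ 2a² + 2b²` finish.
-/

lemma map_add_smul_eq_of_stationarity {R E F 𝓕 : Type*} [Ring R] [AddCommGroup E] [Module R E]
    [AddCommGroup F] [Module R F] [FunLike 𝓕 F E] [LinearMapClass 𝓕 R F E]
    (T : 𝓕) (c : R) {g u v : E} {p r : F} (hstat : g + T p + c • T r + u - v = 0) :
    T (p + c • r) = v - g - u := by
  rw [map_add, map_smul, ← sub_eq_zero, ← hstat]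
  abel

lemma norm_stationarity_residual_sub_le {E : Type*} [SeminormedAddCommGroup E]
    {f' φ' : E → E} {ℓf ℓφ : ℝ}
    (hf' : ∀ u v, ‖f' u - f' v‖ ≤ ℓf * ‖u - v‖) (hφ' : ∀ u v, ‖φ' u - φ' v‖ ≤ ℓφ * ‖u - v‖)
    (u₀ u₁ u₂ : E) :
    ‖(φ' u₁ - f' u₂ - φ' u₂) - (φ' u₀ - f' u₁ - φ' u₁)‖
      ≤ (ℓf + ℓφ) * ‖u₂ - u₁‖ + ℓφ * ‖u₁ - u₀‖ := by
  have hsplit : (φ' u₁ - f' u₂ - φ' u₂) - (φ' u₀ - f' u₁ - φ' u₁)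
      = (f' u₁ - f' u₂) + (φ' u₁ - φ' u₂) - (φ' u₀ - φ' u₁) := by abel
  have h₁ := hf' u₁ u₂
  have h₂ := hφ' u₁ u₂
  have h₃ := hφ' u₀ u₁
  rw [norm_sub_rev u₁] at h₁ h₂
  rw [norm_sub_rev u₀] at h₃
  calc ‖(φ' u₁ - f' u₂ - φ' u₂) - (φ' u₀ - f' u₁ - φ' u₁)‖
      ≤ ‖f' u₁ - f' u₂‖ + ‖φ' u₁ - φ' u₂‖ + ‖φ' u₀ - φ' u₁‖ := by
        rw [hsplit]
        exact (norm_sub_le _ _).trans (by gcongr; exact norm_add_le _ _)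
    _ ≤ (ℓf + ℓφ) * ‖u₂ - u₁‖ + ℓφ * ‖u₁ - u₀‖ := by linarith

lemma sq_le_of_mul_sq_le_sq_of_le_add {μ t s c a d b : ℝ} (hμ : 0 < μ)
    (hts : μ * t ^ 2 ≤ s ^ 2) (hs : 0 ≤ s) (hs_le : s ≤ c * a + d * b) :
    t ^ 2 ≤ 2 * c ^ 2 / μ * a ^ 2 + 2 * d ^ 2 / μ * b ^ 2 := by
  have hsq : s ^ 2 ≤ 2 * ((c * a) ^ 2 + (d * b) ^ 2) :=
    (pow_le_pow_left₀ hs hs_le 2).trans add_sq_le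
  rw [div_mul_eq_mul_div, div_mul_eq_mul_div, ← add_div, le_div_iff₀ hμ]
  linarith

theorem badmm_dual_bound_sq_general {n₁ n₂ m : ℕ}
    (A : EuclideanSpace ℝ (Fin n₁) →L[ℝ] EuclideanSpace ℝ (Fin m))
    (B : EuclideanSpace ℝ (Fin n₂) →L[ℝ] EuclideanSpace ℝ (Fin m))
    (f' φ' : EuclideanSpace ℝ (Fin n₁) → EuclideanSpace ℝ (Fin n₁))
    (ℓf ℓφ : ℝ)
    (hf' : ∀ u v, ‖f' u - f' v‖ ≤ ℓf * ‖u - v‖)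
    (hφ' : ∀ u v, ‖φ' u - φ' v‖ ≤ ℓφ * ‖u - v‖)
    (α μ₀ : ℝ) (hμ₀ : 0 < μ₀)
    (hA : ∀ q : EuclideanSpace ℝ (Fin m),
      μ₀ * ‖q‖ ^ 2 ≤ ‖ContinuousLinearMap.adjoint A q‖ ^ 2)
    (x : ℕ → EuclideanSpace ℝ (Fin n₁)) (y : ℕ → EuclideanSpace ℝ (Fin n₂))
    (p : ℕ → EuclideanSpace ℝ (Fin m)) (k : ℕ) (hk : 1 ≤ k)
    (hstat : ∀ j, (j = k - 1 ∨ j = k) →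
      f' (x (j + 1)) + ContinuousLinearMap.adjoint A (p j)
        + α • ContinuousLinearMap.adjoint A (A (x (j + 1)) - B (y (j + 1)))
        + φ' (x (j + 1)) - φ' (x j) = 0)
    (hdual : ∀ j, (j = k - 1 ∨ j = k) →
      p (j + 1) = p j + α • (A (x (j + 1)) - B (y (j + 1)))) :
    ‖p (k + 1) - p k‖ ^ 2 ≤
      2 * (ℓf + ℓφ) ^ 2 / μ₀ * ‖x (k + 1) - x k‖ ^ 2
        + 2 * ℓφ ^ 2 / μ₀ * ‖x k - x (k - 1)‖ ^ 2 := by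
  obtain ⟨j, rfl⟩ : ∃ j, k = j + 1 := ⟨k - 1, by omega⟩
  simp only [Nat.add_sub_cancel] at hstat hdual ⊢
  have hadj : ∀ i, (i = j ∨ i = j + 1) → ContinuousLinearMap.adjoint A (p (i + 1))
      = φ' (x i) - f' (x (i + 1)) - φ' (x (i + 1)) := fun i hi => by
    rw [hdual i hi]
    exact map_add_smul_eq_of_stationarity _ α (hstat i hi)
  refine sq_le_of_mul_sq_le_sq_of_le_add hμ₀ (hA _) (norm_nonneg _) ?_
  rw [map_sub, hadj _ (.inr rfl), hadj _ (.inl rfl)]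
  exact norm_stationarity_residual_sub_le hf' hφ' _ _ _

theorem badmm_dual_bound_sq {n₁ n₂ m : ℕ} (hn₁ : 0 < n₁) (hn₂ : 0 < n₂) (hm : 0 < m)
    (A : EuclideanSpace ℝ (Fin n₁) →L[ℝ] EuclideanSpace ℝ (Fin m))
    (B : EuclideanSpace ℝ (Fin n₂) →L[ℝ] EuclideanSpace ℝ (Fin m))
    (f φ : EuclideanSpace ℝ (Fin n₁) → ℝ)
    (f' φ' : EuclideanSpace ℝ (Fin n₁) → EuclideanSpace ℝ (Fin n₁))
    (hf : ∀ u, HasGradientAt f (f' u) u) (hφ : ∀ u, HasGradientAt φ (φ' u) u)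
    (ℓf ℓφ : ℝ) (hℓf : 0 ≤ ℓf) (hℓφ : 0 ≤ ℓφ)
    (hf' : ∀ u v, ‖f' u - f' v‖ ≤ ℓf * ‖u - v‖)
    (hφ' : ∀ u v, ‖φ' u - φ' v‖ ≤ ℓφ * ‖u - v‖)
    (α μ₀ : ℝ) (hα : 0 < α) (hμ₀ : 0 < μ₀)
    (hA : ∀ q : EuclideanSpace ℝ (Fin m),
      μ₀ * ‖q‖ ^ 2 ≤ ‖ContinuousLinearMap.adjoint A q‖ ^ 2)
    (x : ℕ → EuclideanSpace ℝ (Fin n₁)) (y : ℕ → EuclideanSpace ℝ (Fin n₂))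
    (p : ℕ → EuclideanSpace ℝ (Fin m)) (k : ℕ) (hk : 1 ≤ k)
    (hstat : ∀ j, (j = k - 1 ∨ j = k) →
      f' (x (j + 1)) + ContinuousLinearMap.adjoint A (p j)
        + α • ContinuousLinearMap.adjoint A (A (x (j + 1)) - B (y (j + 1)))
        + φ' (x (j + 1)) - φ' (x j) = 0)
    (hdual : ∀ j, (j = k - 1 ∨ j = k) →
      p (j + 1) = p j + α • (A (x (j + 1)) - B (y (j + 1)))) :
    ‖p (k + 1) - p k‖ ^ 2 ≤
      2 * (ℓf + ℓφ) ^ 2 / μ₀ * ‖x (k + 1) - x k‖ ^ 2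
        + 2 * ℓφ ^ 2 / μ₀ * ‖x k - x (k - 1)‖ ^ 2 :=
  badmm_dual_bound_sq_general A B f' φ' ℓf ℓφ hf' hφ' α μ₀ hμ₀ hA x y p k hk hstat hdual
end

section
/- Assume either x ↦ L_α(x, y^{k+1}, p^k) is μ₁-strongly convex or φ is μ₁-strongly convex, where μ₁ > 0 and φ is convex differentiable, and assume x^{k+1} is a global minimizer of x ↦ L_α(x, y^{k+1}, p^k) + Δ_φ(x, x^k) over ℝ^{n₁}. Then L_α(x^{k+1}, y^{k+1}, p^k) ≤ L_α(x^k, y^{k+1}, p^k) − (μ₁/2)‖x^{k+1} − x^k‖². -/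
/-!
If `x ↦ L_α(x, y, p)` is `μ₁`-strongly convex, so is `F := L_α(·, y, p) + Δ_φ(·, xᵏ)`, and a
strongly convex function exceeds its minimum at `x^{k+1}` by at least
`μ₁/2 ‖x - x^{k+1}‖²`; evaluate at `xᵏ`, where `Δ_φ(xᵏ, xᵏ) = 0`, and drop
`Δ_φ(x^{k+1}, xᵏ) ≥ 0`. If instead `φ` is `μ₁`-strongly convex, the tangent-line inequality gives
`Δ_φ(x^{k+1}, xᵏ) ≥ μ₁/2 ‖x^{k+1} - xᵏ‖²`, and comparing `F(x^{k+1}) ≤ F(xᵏ)` suffices.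
-/

open scoped InnerProductSpace

/-- The augmented Lagrangian `L_α(x,y,p)`. -/
noncomputable def augL {n₁ n₂ m : ℕ}
    (A : EuclideanSpace ℝ (Fin n₁) →L[ℝ] EuclideanSpace ℝ (Fin m))
    (B : EuclideanSpace ℝ (Fin n₂) →L[ℝ] EuclideanSpace ℝ (Fin m))
    (f : EuclideanSpace ℝ (Fin n₁) → ℝ) (g : EuclideanSpace ℝ (Fin n₂) → ℝ)
    (α : ℝ) (x : EuclideanSpace ℝ (Fin n₁)) (y : EuclideanSpace ℝ (Fin n₂))
    (p : EuclideanSpace ℝ (Fin m)) : ℝ :=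
  f x + g y + ⟪p, A x - B y⟫_ℝ + α / 2 * ‖A x - B y‖ ^ 2

/-- Bregman distance of a differentiable function `h` with gradient `h'`. -/
noncomputable def bregman {n : ℕ} (h : EuclideanSpace ℝ (Fin n) → ℝ)
    (h' : EuclideanSpace ℝ (Fin n) → EuclideanSpace ℝ (Fin n))
    (u v : EuclideanSpace ℝ (Fin n)) : ℝ :=
  h u - h v - ⟪h' v, u - v⟫_ℝ

open Set Filter Topology

section NormedSpace

variable {E : Type*} [NormedAddCommGroup E] [NormedSpace ℝ E]

theorem StrongConvexOn.add_convexOn {s : Set E} {μ : ℝ} {f g : E → ℝ}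
    (hf : StrongConvexOn s μ f) (hg : ConvexOn ℝ s g) : StrongConvexOn s μ (f + g) := by
  have hfg := UniformConvexOn.add hf (uniformConvexOn_zero.mpr hg)
  rwa [add_zero] at hfg

theorem StrongConvexOn.add_sq_norm_le_of_isMinOn {F : E → ℝ} {μ : ℝ}
    (hF : StrongConvexOn univ μ F) {x₀ : E} (hx₀ : IsMinOn F univ x₀) (x : E) :
    F x₀ + μ / 2 * ‖x - x₀‖ ^ 2 ≤ F x := by
  set C := μ / 2 * ‖x - x₀‖ ^ 2 with hC
  have hseg : ∀ t ∈ Ioo (0 : ℝ) 1, F x₀ ≤ F x - (1 - t) * C := by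
    intro t ht
    have hconv := hF.2 (mem_univ x₀) (mem_univ x) (sub_nonneg.2 ht.2.le) ht.1.le
      (sub_add_cancel 1 t)
    have hmin := isMinOn_iff.mp hx₀ ((1 - t) • x₀ + t • x) (mem_univ _)
    simp only [smul_eq_mul] at hconv
    rw [norm_sub_rev, ← hC] at hconv
    have : t * F x₀ ≤ t * (F x - (1 - t) * C) := by linarith
    exact le_of_mul_le_mul_left this ht.1
  have hlim : Tendsto (fun t : ℝ => F x - (1 - t) * C) (𝓝[>] 0) (𝓝 (F x - C)) := by
    have hcont : Continuous fun t : ℝ => F x - (1 - t) * C := by fun_prop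
    simpa using (hcont.tendsto 0).mono_left nhdsWithin_le_nhds
  have := ge_of_tendsto hlim (by
    filter_upwards [Ioo_mem_nhdsGT one_pos] with t ht using hseg t ht)
  linarith

end NormedSpace

section InnerProductSpace

variable {E : Type*} [NormedAddCommGroup E] [InnerProductSpace ℝ E]

theorem ConvexOn.add_le_of_hasDerivAt_line {c : E → ℝ} (hc : ConvexOn ℝ univ c) {x d : E}
    {c' : ℝ} (hc' : HasDerivAt (fun t : ℝ => c (x + t • d)) c' 0) : c x + c' ≤ c (x + d) := by
  have hline : ConvexOn ℝ univ (fun t : ℝ => c (x + t • d)) := by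
    simpa [Function.comp_def, AffineMap.lineMap_apply_module', add_comm] using
      hc.comp_affineMap (AffineMap.lineMap x (x + d))
  have h := hline.le_slope_of_hasDerivAt (mem_univ 0) (mem_univ 1) one_pos hc'
  simp only [slope_def_field, zero_smul, add_zero, one_smul, sub_zero, div_one] at h
  linarith

theorem StrongConvexOn.add_inner_add_le_of_hasGradientAt [CompleteSpace E] {h : E → ℝ}
    {μ : ℝ} (hh : StrongConvexOn univ μ h) {h' x : E} (hd : HasGradientAt h h' x) (y : E) :
    h x + ⟪h', y - x⟫_ℝ + μ / 2 * ‖y - x‖ ^ 2 ≤ h y := by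
  set d := y - x
  have hline : HasDerivAt (fun t : ℝ => x + t • d) d 0 := by
    simpa using ((hasDerivAt_id (0 : ℝ)).smul_const d).const_add x
  have hder : HasDerivAt (fun t : ℝ => h (x + t • d) - μ / 2 * ‖x + t • d‖ ^ 2)
      (⟪h', d⟫_ℝ - μ / 2 * (2 * ⟪x, d⟫_ℝ)) 0 := by
    have hgrad := hd.hasFDerivAt.comp_hasDerivAt_of_eq 0 hline (by simp)
    rw [InnerProductSpace.toDual_apply_apply] at hgrad
    simpa using hgrad.fun_sub ((hline.norm_sq).const_mul (μ / 2))
  have htangent := (strongConvexOn_iff_convex.mp hh).add_le_of_hasDerivAt_line hder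
  have hy : x + d = y := add_sub_cancel x y
  rw [hy] at htangent
  have hsq : ‖y‖ ^ 2 = ‖x‖ ^ 2 + 2 * ⟪x, d⟫_ℝ + ‖d‖ ^ 2 := by
    rw [← hy, norm_add_sq_real]
  rw [hsq] at htangent
  linarith

end InnerProductSpace

section Bregman

variable {n : ℕ} {h : EuclideanSpace ℝ (Fin n) → ℝ}
  {h' : EuclideanSpace ℝ (Fin n) → EuclideanSpace ℝ (Fin n)}

@[simp]
theorem bregman_self (v : EuclideanSpace ℝ (Fin n)) : bregman h h' v v = 0 := by
  simp [bregman]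

theorem StrongConvexOn.sq_norm_le_bregman {μ : ℝ} (hh : StrongConvexOn univ μ h)
    {v : EuclideanSpace ℝ (Fin n)} (hd : HasGradientAt h (h' v) v)
    (u : EuclideanSpace ℝ (Fin n)) : μ / 2 * ‖u - v‖ ^ 2 ≤ bregman h h' u v := by
  have := hh.add_inner_add_le_of_hasGradientAt hd u
  unfold bregman
  linarith

theorem ConvexOn.bregman_nonneg (hh : ConvexOn ℝ univ h) {v : EuclideanSpace ℝ (Fin n)}
    (hd : HasGradientAt h (h' v) v) (u : EuclideanSpace ℝ (Fin n)) : 0 ≤ bregman h h' u v := by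
  simpa using (strongConvexOn_zero.mpr hh).sq_norm_le_bregman hd u

theorem ConvexOn.bregman_left (hh : ConvexOn ℝ univ h)
    (h' : EuclideanSpace ℝ (Fin n) → EuclideanSpace ℝ (Fin n)) (v : EuclideanSpace ℝ (Fin n)) :
    ConvexOn ℝ univ fun u => bregman h h' u v := by
  have := (hh.sub ((innerₛₗ ℝ (h' v)).concaveOn convex_univ)).add_const (⟪h' v, v⟫_ℝ - h v)
  refine this.congr fun u _ => ?_
  simp only [bregman, inner_sub_right, Pi.add_apply, Pi.sub_apply, innerₛₗ_apply_apply]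
  ring

end Bregman

theorem badmm_x_descent_general {n₁ n₂ m : ℕ}
    (A : EuclideanSpace ℝ (Fin n₁) →L[ℝ] EuclideanSpace ℝ (Fin m))
    (B : EuclideanSpace ℝ (Fin n₂) →L[ℝ] EuclideanSpace ℝ (Fin m))
    (f : EuclideanSpace ℝ (Fin n₁) → ℝ) (g : EuclideanSpace ℝ (Fin n₂) → ℝ)
    (α : ℝ)
    (φ : EuclideanSpace ℝ (Fin n₁) → ℝ)
    (φ' : EuclideanSpace ℝ (Fin n₁) → EuclideanSpace ℝ (Fin n₁))
    (hφconv : ConvexOn ℝ Set.univ φ)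
    (hφdiff : ∀ u, HasGradientAt φ (φ' u) u)
    (μ₁ : ℝ)
    (xk x1 : EuclideanSpace ℝ (Fin n₁)) (y1 : EuclideanSpace ℝ (Fin n₂))
    (pk : EuclideanSpace ℝ (Fin m))
    (hsc : ConvexOn ℝ Set.univ
          (fun x => augL A B f g α x y1 pk - μ₁ / 2 * ‖x‖ ^ 2) ∨
        ConvexOn ℝ Set.univ (fun x => φ x - μ₁ / 2 * ‖x‖ ^ 2))
    (hmin : ∀ x : EuclideanSpace ℝ (Fin n₁),
      augL A B f g α x1 y1 pk + bregman φ φ' x1 xk ≤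
        augL A B f g α x y1 pk + bregman φ φ' x xk) :
    augL A B f g α x1 y1 pk ≤
      augL A B f g α xk y1 pk - μ₁ / 2 * ‖x1 - xk‖ ^ 2 := by
  rcases hsc with hL | hφ
  · have hF := (strongConvexOn_iff_convex.mpr hL).add_convexOn (hφconv.bregman_left φ' xk)
    have hdescent := hF.add_sq_norm_le_of_isMinOn (isMinOn_univ_iff.mpr hmin) xk
    simp only [Pi.add_apply, bregman_self, add_zero] at hdescent
    rw [norm_sub_rev]
    linarith [hφconv.bregman_nonneg (hφdiff xk) x1]
  · have hD := (strongConvexOn_iff_convex.mpr hφ).sq_norm_le_bregman (hφdiff xk) x1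
    have hmin_xk := hmin xk
    rw [bregman_self, add_zero] at hmin_xk
    linarith

theorem badmm_x_descent {n₁ n₂ m : ℕ} (hn₁ : 0 < n₁) (hn₂ : 0 < n₂) (hm : 0 < m)
    (A : EuclideanSpace ℝ (Fin n₁) →L[ℝ] EuclideanSpace ℝ (Fin m))
    (B : EuclideanSpace ℝ (Fin n₂) →L[ℝ] EuclideanSpace ℝ (Fin m))
    (f : EuclideanSpace ℝ (Fin n₁) → ℝ) (g : EuclideanSpace ℝ (Fin n₂) → ℝ)
    (hf : Differentiable ℝ f) (α : ℝ) (hα : 0 < α)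
    (φ : EuclideanSpace ℝ (Fin n₁) → ℝ)
    (φ' : EuclideanSpace ℝ (Fin n₁) → EuclideanSpace ℝ (Fin n₁))
    (hφconv : ConvexOn ℝ Set.univ φ)
    (hφdiff : ∀ u, HasGradientAt φ (φ' u) u)
    (μ₁ : ℝ) (hμ₁ : 0 < μ₁)
    (xk x1 : EuclideanSpace ℝ (Fin n₁)) (y1 : EuclideanSpace ℝ (Fin n₂))
    (pk : EuclideanSpace ℝ (Fin m))
    (hsc : ConvexOn ℝ Set.univ
          (fun x => augL A B f g α x y1 pk - μ₁ / 2 * ‖x‖ ^ 2) ∨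
        ConvexOn ℝ Set.univ (fun x => φ x - μ₁ / 2 * ‖x‖ ^ 2))
    (hmin : ∀ x : EuclideanSpace ℝ (Fin n₁),
      augL A B f g α x1 y1 pk + bregman φ φ' x1 xk ≤
        augL A B f g α x y1 pk + bregman φ φ' x xk) :
    augL A B f g α x1 y1 pk ≤
      augL A B f g α xk y1 pk - μ₁ / 2 * ‖x1 - xk‖ ^ 2 :=
  badmm_x_descent_general A B f g α φ φ' hφconv hφdiff μ₁ xk x1 y1 pk hsc hmin
end

section
/- Suppose B satisfies ‖Bv‖² ≥ μ_B‖v‖² for all v ∈ ℝ^{n₂} with μ_B > 0, and the dual update holds at steps k−1 and k, i.e., p^{k+1} = p^k + α(Ax^{k+1} − By^{k+1}) and p^k = p^{k−1} + α(Ax^k − By^k). Then α²μ_B‖y^k − y^{k+1}‖² ≤ 3(‖p^k − p^{k+1}‖² + ‖p^{k−1} − p^k‖² + α²‖A‖²‖x^{k+1} − x^k‖²), where ‖A‖ is the operator norm of A. -/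
/-!
Subtracting the two dual updates gives
`α • B (y k - y (k + 1)) = (p (k + 1) - p k) + (p (k - 1) - p k) + α • A (x k - x (k + 1))`.
The lower bound on `B` controls the left side from below, and `‖a + b + c‖² ≤ 3 (‖a‖² + ‖b‖² + ‖c‖²)`
together with `‖A v‖ ≤ ‖A‖ ‖v‖` controls the right side from above.
-/

theorem norm_add₃_sq_le {E : Type*} [SeminormedAddCommGroup E] (a b c : E) :
    ‖a + b + c‖ ^ 2 ≤ 3 * (‖a‖ ^ 2 + ‖b‖ ^ 2 + ‖c‖ ^ 2) := by
  calc ‖a + b + c‖ ^ 2 ≤ (‖a‖ + ‖b‖ + ‖c‖) ^ 2 := by gcongr; exact norm_add₃_le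
    _ ≤ 3 * (‖a‖ ^ 2 + ‖b‖ ^ 2 + ‖c‖ ^ 2) := by
      nlinarith [sq_nonneg (‖a‖ - ‖b‖), sq_nonneg (‖b‖ - ‖c‖), sq_nonneg (‖a‖ - ‖c‖)]

theorem norm_smul_sq {E : Type*} [SeminormedAddCommGroup E] [NormedSpace ℝ E] (α : ℝ) (v : E) :
    ‖α • v‖ ^ 2 = α ^ 2 * ‖v‖ ^ 2 := by
  rw [norm_smul, mul_pow, Real.norm_eq_abs, sq_abs]

theorem smul_map_sub_of_dual_updates {R E₁ E₂ F G₁ G₂ : Type*} [CommRing R] [AddCommGroup E₁]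
    [AddCommGroup E₂] [AddCommGroup F] [Module R F] [FunLike G₁ E₁ F] [AddMonoidHomClass G₁ E₁ F]
    [FunLike G₂ E₂ F] [AddMonoidHomClass G₂ E₂ F] (A : G₁) (B : G₂) (α : R)
    (x₁ x₂ : E₁) (y₁ y₂ : E₂) (p₀ p₁ p₂ : F)
    (h₂ : p₂ = p₁ + α • (A x₂ - B y₂)) (h₁ : p₁ = p₀ + α • (A x₁ - B y₁)) :
    α • B (y₁ - y₂) = (p₂ - p₁) + (p₀ - p₁) + α • A (x₁ - x₂) := by
  rw [map_sub, map_sub, h₂, h₁]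
  module

theorem badmm_y_bound_sq_general {n₁ n₂ m : ℕ}
    (A : EuclideanSpace ℝ (Fin n₁) →L[ℝ] EuclideanSpace ℝ (Fin m))
    (B : EuclideanSpace ℝ (Fin n₂) →L[ℝ] EuclideanSpace ℝ (Fin m))
    (α : ℝ) (μB : ℝ)
    (hB : ∀ v : EuclideanSpace ℝ (Fin n₂), μB * ‖v‖ ^ 2 ≤ ‖B v‖ ^ 2)
    (x : ℕ → EuclideanSpace ℝ (Fin n₁)) (y : ℕ → EuclideanSpace ℝ (Fin n₂))
    (p : ℕ → EuclideanSpace ℝ (Fin m)) (k : ℕ)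
    (hdual : p (k + 1) = p k + α • (A (x (k + 1)) - B (y (k + 1))))
    (hdual' : p k = p (k - 1) + α • (A (x k) - B (y k))) :
    α ^ 2 * μB * ‖y k - y (k + 1)‖ ^ 2 ≤
      3 * (‖p k - p (k + 1)‖ ^ 2 + ‖p (k - 1) - p k‖ ^ 2
        + α ^ 2 * ‖A‖ ^ 2 * ‖x (k + 1) - x k‖ ^ 2) := by
  have hA : ‖A (x k - x (k + 1))‖ ^ 2 ≤ ‖A‖ ^ 2 * ‖x (k + 1) - x k‖ ^ 2 := by
    rw [← mul_pow, norm_sub_rev (x _)]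
    gcongr
    exact A.le_opNorm _
  calc α ^ 2 * μB * ‖y k - y (k + 1)‖ ^ 2
      ≤ ‖α • B (y k - y (k + 1))‖ ^ 2 := by
        rw [norm_smul_sq, mul_assoc]
        gcongr
        exact hB _
    _ = ‖(p (k + 1) - p k) + (p (k - 1) - p k) + α • A (x k - x (k + 1))‖ ^ 2 := by
        rw [smul_map_sub_of_dual_updates A B α _ _ _ _ _ _ _ hdual hdual']
    _ ≤ 3 * (‖p k - p (k + 1)‖ ^ 2 + ‖p (k - 1) - p k‖ ^ 2
        + α ^ 2 * ‖A (x k - x (k + 1))‖ ^ 2) := by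
        rw [← norm_smul_sq, norm_sub_rev (p k)]
        exact norm_add₃_sq_le _ _ _
    _ ≤ 3 * (‖p k - p (k + 1)‖ ^ 2 + ‖p (k - 1) - p k‖ ^ 2
        + α ^ 2 * ‖A‖ ^ 2 * ‖x (k + 1) - x k‖ ^ 2) := by
        rw [mul_assoc (α ^ 2)]
        gcongr

theorem badmm_y_bound_sq {n₁ n₂ m : ℕ} (hn₁ : 0 < n₁) (hn₂ : 0 < n₂) (hm : 0 < m)
    (A : EuclideanSpace ℝ (Fin n₁) →L[ℝ] EuclideanSpace ℝ (Fin m))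
    (B : EuclideanSpace ℝ (Fin n₂) →L[ℝ] EuclideanSpace ℝ (Fin m))
    (α : ℝ) (hα : 0 < α) (μB : ℝ) (hμB : 0 < μB)
    (hB : ∀ v : EuclideanSpace ℝ (Fin n₂), μB * ‖v‖ ^ 2 ≤ ‖B v‖ ^ 2)
    (x : ℕ → EuclideanSpace ℝ (Fin n₁)) (y : ℕ → EuclideanSpace ℝ (Fin n₂))
    (p : ℕ → EuclideanSpace ℝ (Fin m)) (k : ℕ) (hk : 1 ≤ k)
    (hdual : p (k + 1) = p k + α • (A (x (k + 1)) - B (y (k + 1))))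
    (hdual' : p k = p (k - 1) + α • (A (x k) - B (y k))) :
    α ^ 2 * μB * ‖y k - y (k + 1)‖ ^ 2 ≤
      3 * (‖p k - p (k + 1)‖ ^ 2 + ‖p (k - 1) - p k‖ ^ 2
        + α ^ 2 * ‖A‖ ^ 2 * ‖x (k + 1) - x k‖ ^ 2) :=
  badmm_y_bound_sq_general A B α μB hB x y p k hdual hdual'
end

section
/- Suppose the x-stationarity condition together with the dual update holds at steps k−1 and k (k ≥ 1). Then ‖p^{k+1} − p^k‖ ≤ (√2(ℓ_f + ℓ_φ)/√μ₀)·(‖x^{k+1} − x^k‖ + ‖x^k − x^{k−1}‖). -/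
/-!
Subtracting the x-stationarity conditions at steps `k - 1` and `k`, after eliminating `p^k`
and `p^{k+1}` with the dual updates, expresses `A^⊤ (p^{k+1} - p^k)` through differences of
`∇f` and `∇φ` at consecutive iterates; their Lipschitz bounds control its norm, and
`‖A^⊤ q‖ ≥ √μ₀ ‖q‖` transfers the bound to `p^{k+1} - p^k`.
-/

theorem le_div_sqrt_of_mul_sq_le {a b μ : ℝ} (hμ : 0 < μ) (hb : 0 ≤ b)
    (h : μ * a ^ 2 ≤ b ^ 2) : a ≤ b / √μ := by
  rw [le_div_iff₀ (Real.sqrt_pos.mpr hμ)]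
  refine (abs_le_of_sq_le_sq' ?_ hb).2
  rwa [mul_pow, Real.sq_sqrt hμ.le, mul_comm]

theorem map_dual_update_eq {E F : Type*} [AddCommGroup E] [Module ℝ E] [AddCommGroup F]
    [Module ℝ F] {T : F →ₗ[ℝ] E} {α : ℝ} {g a b : E} {p p' r : F}
    (hstat : g + T p + α • T r + a - b = 0) (hdual : p' = p + α • r) :
    T p' = b - g - a := by
  rw [hdual, map_add, map_smul, ← sub_eq_zero, ← hstat]
  abel

theorem norm_grad_increment_le {E F : Type*} [SeminormedAddCommGroup E]
    [SeminormedAddCommGroup F] {f' φ' : E → F} {ℓf ℓφ : ℝ} (hℓf : 0 ≤ ℓf)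
    (hf' : ∀ u v, ‖f' u - f' v‖ ≤ ℓf * ‖u - v‖) (hφ' : ∀ u v, ‖φ' u - φ' v‖ ≤ ℓφ * ‖u - v‖)
    (u₀ u₁ u₂ : E) :
    ‖(φ' u₁ - f' u₂ - φ' u₂) - (φ' u₀ - f' u₁ - φ' u₁)‖
      ≤ (ℓf + ℓφ) * (‖u₂ - u₁‖ + ‖u₁ - u₀‖) := by
  have hsplit : (φ' u₁ - f' u₂ - φ' u₂) - (φ' u₀ - f' u₁ - φ' u₁)
      = (φ' u₁ - φ' u₀) - ((f' u₂ - f' u₁) + (φ' u₂ - φ' u₁)) := by abel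
  have h₀ : 0 ≤ ℓf * ‖u₁ - u₀‖ := by positivity
  calc _ ≤ ‖φ' u₁ - φ' u₀‖ + (‖f' u₂ - f' u₁‖ + ‖φ' u₂ - φ' u₁‖) := by
        rw [hsplit]
        exact (norm_sub_le _ _).trans (add_le_add_right (norm_add_le _ _) _)
    _ ≤ ℓφ * ‖u₁ - u₀‖ + (ℓf * ‖u₂ - u₁‖ + ℓφ * ‖u₂ - u₁‖) := by
        gcongr
        exacts [hφ' _ _, hf' _ _, hφ' _ _]
    _ ≤ (ℓf + ℓφ) * (‖u₂ - u₁‖ + ‖u₁ - u₀‖) := by linarith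

theorem badmm_dual_bound_general {n₁ n₂ m : ℕ}
    (A : EuclideanSpace ℝ (Fin n₁) →L[ℝ] EuclideanSpace ℝ (Fin m))
    (B : EuclideanSpace ℝ (Fin n₂) →L[ℝ] EuclideanSpace ℝ (Fin m))
    (f' φ' : EuclideanSpace ℝ (Fin n₁) → EuclideanSpace ℝ (Fin n₁))
    (ℓf ℓφ : ℝ) (hℓf : 0 ≤ ℓf) (hℓφ : 0 ≤ ℓφ)
    (hf' : ∀ u v, ‖f' u - f' v‖ ≤ ℓf * ‖u - v‖)
    (hφ' : ∀ u v, ‖φ' u - φ' v‖ ≤ ℓφ * ‖u - v‖)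
    (α μ₀ : ℝ) (hμ₀ : 0 < μ₀)
    (hA : ∀ q : EuclideanSpace ℝ (Fin m),
      μ₀ * ‖q‖ ^ 2 ≤ ‖ContinuousLinearMap.adjoint A q‖ ^ 2)
    (x : ℕ → EuclideanSpace ℝ (Fin n₁)) (y : ℕ → EuclideanSpace ℝ (Fin n₂))
    (p : ℕ → EuclideanSpace ℝ (Fin m)) (k : ℕ) (hk : 1 ≤ k)
    (hstat : ∀ j, (j = k - 1 ∨ j = k) →
      f' (x (j + 1)) + ContinuousLinearMap.adjoint A (p j)
        + α • ContinuousLinearMap.adjoint A (A (x (j + 1)) - B (y (j + 1)))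
        + φ' (x (j + 1)) - φ' (x j) = 0)
    (hdual : ∀ j, (j = k - 1 ∨ j = k) →
      p (j + 1) = p j + α • (A (x (j + 1)) - B (y (j + 1)))) :
    ‖p (k + 1) - p k‖ ≤
      Real.sqrt 2 * (ℓf + ℓφ) / Real.sqrt μ₀
        * (‖x (k + 1) - x k‖ + ‖x k - x (k - 1)‖) := by
  set T := (ContinuousLinearMap.adjoint A).toLinearMap
  have hTp : ∀ j, (j = k - 1 ∨ j = k) →
      T (p (j + 1)) = φ' (x j) - f' (x (j + 1)) - φ' (x (j + 1)) := fun j hj =>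
    map_dual_update_eq (hstat j hj) (hdual j hj)
  have hT : ‖T (p (k + 1) - p k)‖ ≤ (ℓf + ℓφ) * (‖x (k + 1) - x k‖ + ‖x k - x (k - 1)‖) := by
    obtain ⟨j, rfl⟩ : ∃ j, k = j + 1 := ⟨k - 1, by omega⟩
    rw [map_sub, hTp (j + 1) (Or.inr rfl), hTp j (Or.inl (by omega)), Nat.add_sub_cancel]
    exact norm_grad_increment_le hℓf hf' hφ' _ _ _
  calc ‖p (k + 1) - p k‖ ≤ ‖T (p (k + 1) - p k)‖ / √μ₀ :=
        le_div_sqrt_of_mul_sq_le hμ₀ (norm_nonneg _) (hA _)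
    _ ≤ (ℓf + ℓφ) * (‖x (k + 1) - x k‖ + ‖x k - x (k - 1)‖) / √μ₀ := by gcongr
    _ ≤ √2 * (ℓf + ℓφ) / √μ₀ * (‖x (k + 1) - x k‖ + ‖x k - x (k - 1)‖) := by
        rw [mul_div_right_comm]
        gcongr
        exact le_mul_of_one_le_left (by positivity) Real.one_lt_sqrt_two.le

theorem badmm_dual_bound {n₁ n₂ m : ℕ} (hn₁ : 0 < n₁) (hn₂ : 0 < n₂) (hm : 0 < m)
    (A : EuclideanSpace ℝ (Fin n₁) →L[ℝ] EuclideanSpace ℝ (Fin m))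
    (B : EuclideanSpace ℝ (Fin n₂) →L[ℝ] EuclideanSpace ℝ (Fin m))
    (f φ : EuclideanSpace ℝ (Fin n₁) → ℝ)
    (f' φ' : EuclideanSpace ℝ (Fin n₁) → EuclideanSpace ℝ (Fin n₁))
    (hf : ∀ u, HasGradientAt f (f' u) u) (hφ : ∀ u, HasGradientAt φ (φ' u) u)
    (ℓf ℓφ : ℝ) (hℓf : 0 ≤ ℓf) (hℓφ : 0 ≤ ℓφ)
    (hf' : ∀ u v, ‖f' u - f' v‖ ≤ ℓf * ‖u - v‖)
    (hφ' : ∀ u v, ‖φ' u - φ' v‖ ≤ ℓφ * ‖u - v‖)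
    (α μ₀ : ℝ) (hα : 0 < α) (hμ₀ : 0 < μ₀)
    (hA : ∀ q : EuclideanSpace ℝ (Fin m),
      μ₀ * ‖q‖ ^ 2 ≤ ‖ContinuousLinearMap.adjoint A q‖ ^ 2)
    (x : ℕ → EuclideanSpace ℝ (Fin n₁)) (y : ℕ → EuclideanSpace ℝ (Fin n₂))
    (p : ℕ → EuclideanSpace ℝ (Fin m)) (k : ℕ) (hk : 1 ≤ k)
    (hstat : ∀ j, (j = k - 1 ∨ j = k) →
      f' (x (j + 1)) + ContinuousLinearMap.adjoint A (p j)
        + α • ContinuousLinearMap.adjoint A (A (x (j + 1)) - B (y (j + 1)))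
        + φ' (x (j + 1)) - φ' (x j) = 0)
    (hdual : ∀ j, (j = k - 1 ∨ j = k) →
      p (j + 1) = p j + α • (A (x (j + 1)) - B (y (j + 1)))) :
    ‖p (k + 1) - p k‖ ≤
      Real.sqrt 2 * (ℓf + ℓφ) / Real.sqrt μ₀
        * (‖x (k + 1) - x k‖ + ‖x k - x (k - 1)‖) :=
  badmm_dual_bound_general A B f' φ' ℓf ℓφ hℓf hℓφ hf' hφ' α μ₀ hμ₀ hA x y p k hk hstat hdual
end

section
/- Suppose in addition that B satisfies ‖Bv‖² ≥ μ_B‖v‖² for all v ∈ ℝ^{n₂} with μ_B > 0, and that the x-stationarity condition together with the dual update holds at steps k−3, k−2, k−1 and k (k ≥ 3). Then there exists a constant κ₂ > 0, depending only on ℓ_f, ℓ_φ, μ₀, μ_B, α and the operator norm ‖A‖, such that ‖y^k − y^{k+1}‖ ≤ κ₂(‖x^k − x^{k+1}‖ + ‖x^k − x^{k−1}‖ + ‖x^{k−1} − x^{k−2}‖). -/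
/-!
Write `M` for the adjoint of `A`. Substituting the dual update into the `x`-stationarity
condition eliminates `y` and gives `M p^{j+1} = ∇φ(x^j) - ∇f(x^{j+1}) - ∇φ(x^{j+1})`, so the
lower bound `‖M q‖ ≥ √μ₀ ‖q‖` and the Lipschitz gradients control the dual increments
`p^{j+1} - p^j` by primal increments. Two consecutive dual updates give
`α B(y^k - y^{k+1}) = α A(x^k - x^{k+1}) - (p^k - p^{k-1}) + (p^{k+1} - p^k)`,
and the lower bound `‖B v‖ ≥ √μ_B ‖v‖` turns this into the bound on `‖y^k - y^{k+1}‖`.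
-/

theorem sqrt_mul_le_of_mul_sq_le {μ a b : ℝ} (hb : 0 ≤ b) (h : μ * a ^ 2 ≤ b ^ 2) :
    √μ * a ≤ b :=
  calc √μ * a ≤ √μ * |a| := mul_le_mul_of_nonneg_left (le_abs_self a) (Real.sqrt_nonneg μ)
    _ = √(μ * a ^ 2) := by rw [Real.sqrt_mul' μ (sq_nonneg a), Real.sqrt_sq_eq_abs]
    _ ≤ √(b ^ 2) := Real.sqrt_le_sqrt h
    _ = b := Real.sqrt_sq hb

section BregmanADMM

variable {E F G : Type*} [NormedAddCommGroup E] [NormedSpace ℝ E]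
  [NormedAddCommGroup F] [NormedSpace ℝ F] [NormedAddCommGroup G] [NormedSpace ℝ G]
  {f' φ' : E → E} {ℓf ℓφ α : ℝ}

theorem apply_dual_eq_of_stationary {M : F →L[ℝ] E} {x₀ x₁ : E} {p₀ p₁ r : F}
    (hstat : f' x₁ + M p₀ + α • M r + φ' x₁ - φ' x₀ = 0) (hdual : p₁ = p₀ + α • r) :
    M p₁ = φ' x₀ - f' x₁ - φ' x₁ := by
  rw [hdual, map_add, map_smul, ← sub_eq_zero, ← hstat]
  abel

theorem mul_norm_dual_sub_le {M : F →L[ℝ] E} {c : ℝ} (hM : ∀ q, c * ‖q‖ ≤ ‖M q‖)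
    (hf' : ∀ u v, ‖f' u - f' v‖ ≤ ℓf * ‖u - v‖) (hφ' : ∀ u v, ‖φ' u - φ' v‖ ≤ ℓφ * ‖u - v‖)
    {x₀ x₁ x₂ : E} {p₁ p₂ : F}
    (h₁ : M p₁ = φ' x₀ - f' x₁ - φ' x₁) (h₂ : M p₂ = φ' x₁ - f' x₂ - φ' x₂) :
    c * ‖p₂ - p₁‖ ≤ (ℓf + ℓφ) * ‖x₁ - x₂‖ + ℓφ * ‖x₁ - x₀‖ := by
  have hdiff : M (p₂ - p₁) = (f' x₁ - f' x₂) + (φ' x₁ - φ' x₂) + (φ' x₁ - φ' x₀) := by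
    rw [map_sub, h₁, h₂]
    abel
  calc c * ‖p₂ - p₁‖ ≤ ‖M (p₂ - p₁)‖ := hM _
    _ ≤ ‖f' x₁ - f' x₂‖ + ‖φ' x₁ - φ' x₂‖ + ‖φ' x₁ - φ' x₀‖ := hdiff ▸ norm_add₃_le
    _ ≤ (ℓf + ℓφ) * ‖x₁ - x₂‖ + ℓφ * ‖x₁ - x₀‖ := by
      linarith [hf' x₁ x₂, hφ' x₁ x₂, hφ' x₁ x₀]

theorem mul_norm_sub_le_of_dual_updates {A : E →L[ℝ] F} {B : G →L[ℝ] F} {c : ℝ}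
    (hB : ∀ v, c * ‖v‖ ≤ ‖B v‖) (hα : 0 ≤ α) {x₁ x₂ : E} {y₁ y₂ : G} {p₀ p₁ p₂ : F}
    (h₁ : p₁ = p₀ + α • (A x₁ - B y₁)) (h₂ : p₂ = p₁ + α • (A x₂ - B y₂)) :
    α * c * ‖y₁ - y₂‖ ≤ α * ‖A‖ * ‖x₁ - x₂‖ + ‖p₁ - p₀‖ + ‖p₂ - p₁‖ := by
  have hBy : α • B (y₁ - y₂) = α • A (x₁ - x₂) - (p₁ - p₀) + (p₂ - p₁) := by
    rw [h₂, h₁, map_sub, map_sub, smul_sub, smul_sub, smul_sub, smul_sub]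
    abel
  calc α * c * ‖y₁ - y₂‖ ≤ α * ‖B (y₁ - y₂)‖ := by
        rw [mul_assoc]; exact mul_le_mul_of_nonneg_left (hB _) hα
    _ = ‖α • A (x₁ - x₂) - (p₁ - p₀) + (p₂ - p₁)‖ := by
        rw [← hBy, norm_smul, Real.norm_of_nonneg hα]
    _ ≤ ‖α • A (x₁ - x₂)‖ + ‖p₁ - p₀‖ + ‖p₂ - p₁‖ := (norm_add_le _ _).trans (by gcongr; exact norm_sub_le _ _)
    _ ≤ α * ‖A‖ * ‖x₁ - x₂‖ + ‖p₁ - p₀‖ + ‖p₂ - p₁‖ := by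
        rw [norm_smul, Real.norm_of_nonneg hα, mul_assoc]
        gcongr
        exact A.le_opNorm _

theorem badmm_norm_y_sub_le {A : E →L[ℝ] F} {B : G →L[ℝ] F} {M : F →L[ℝ] E} {c₀ cB : ℝ}
    (hM : ∀ q, c₀ * ‖q‖ ≤ ‖M q‖) (hB : ∀ v, cB * ‖v‖ ≤ ‖B v‖)
    (hc₀ : 0 < c₀) (hcB : 0 < cB) (hα : 0 < α) (hℓf : 0 ≤ ℓf) (hℓφ : 0 ≤ ℓφ)
    (hf' : ∀ u v, ‖f' u - f' v‖ ≤ ℓf * ‖u - v‖) (hφ' : ∀ u v, ‖φ' u - φ' v‖ ≤ ℓφ * ‖u - v‖)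
    {x : ℕ → E} {y : ℕ → G} {p : ℕ → F} {i : ℕ}
    (hstat : ∀ j, i ≤ j → j ≤ i + 2 →
      f' (x (j + 1)) + M (p j) + α • M (A (x (j + 1)) - B (y (j + 1)))
        + φ' (x (j + 1)) - φ' (x j) = 0)
    (hdual : ∀ j, i ≤ j → j ≤ i + 2 → p (j + 1) = p j + α • (A (x (j + 1)) - B (y (j + 1)))) :
    ‖y (i + 2) - y (i + 3)‖ ≤ (α * c₀ * ‖A‖ + ℓf + 2 * ℓφ) / (α * c₀ * cB)
      * (‖x (i + 2) - x (i + 3)‖ + ‖x (i + 2) - x (i + 1)‖ + ‖x (i + 1) - x i‖) := by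
  have e : ∀ j, i ≤ j → j ≤ i + 2 → M (p (j + 1)) = φ' (x j) - f' (x (j + 1)) - φ' (x (j + 1)) :=
    fun j h₁ h₂ ↦ apply_dual_eq_of_stationary (hstat j h₁ h₂) (hdual j h₁ h₂)
  have hN₀ := mul_norm_dual_sub_le hM hf' hφ' (e i le_rfl (by omega)) (e (i + 1) (by omega) (by omega))
  have hN₁ := mul_norm_dual_sub_le hM hf' hφ' (e (i + 1) (by omega) (by omega))
    (e (i + 2) (by omega) le_rfl)
  have hy := mul_norm_sub_le_of_dual_updates hB hα.le (hdual (i + 1) (by omega) (by omega))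
    (hdual (i + 2) (by omega) le_rfl)
  rw [norm_sub_rev (x (i + 1))] at hN₀
  rw [div_mul_eq_mul_div, le_div_iff₀ (by positivity)]
  have hd₁ := norm_nonneg (x (i + 2) - x (i + 3))
  have hd₂ := norm_nonneg (x (i + 2) - x (i + 1))
  have hd₃ := norm_nonneg (x (i + 1) - x i)
  nlinarith [mul_le_mul_of_nonneg_left hy hc₀.le, mul_nonneg hℓf hd₃, mul_nonneg hℓφ hd₁,
    mul_nonneg (mul_nonneg (mul_nonneg hα.le hc₀.le) (norm_nonneg A)) (add_nonneg hd₂ hd₃)]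

end BregmanADMM

theorem badmm_y_diff_bound_general {n₁ n₂ m : ℕ}
    (A : EuclideanSpace ℝ (Fin n₁) →L[ℝ] EuclideanSpace ℝ (Fin m))
    (B : EuclideanSpace ℝ (Fin n₂) →L[ℝ] EuclideanSpace ℝ (Fin m))
    (f' φ' : EuclideanSpace ℝ (Fin n₁) → EuclideanSpace ℝ (Fin n₁))
    (ℓf ℓφ : ℝ) (hℓf : 0 ≤ ℓf) (hℓφ : 0 ≤ ℓφ)
    (hf' : ∀ u v, ‖f' u - f' v‖ ≤ ℓf * ‖u - v‖)
    (hφ' : ∀ u v, ‖φ' u - φ' v‖ ≤ ℓφ * ‖u - v‖)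
    (α μ₀ μB : ℝ) (hα : 0 < α) (hμ₀ : 0 < μ₀) (hμB : 0 < μB)
    (hA : ∀ q : EuclideanSpace ℝ (Fin m),
      μ₀ * ‖q‖ ^ 2 ≤ ‖ContinuousLinearMap.adjoint A q‖ ^ 2)
    (hB : ∀ v : EuclideanSpace ℝ (Fin n₂), μB * ‖v‖ ^ 2 ≤ ‖B v‖ ^ 2) :
    ∃ κ₂ > (0 : ℝ),
      ∀ (x : ℕ → EuclideanSpace ℝ (Fin n₁)) (y : ℕ → EuclideanSpace ℝ (Fin n₂))
        (p : ℕ → EuclideanSpace ℝ (Fin m)) (k : ℕ), 3 ≤ k →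
        (∀ j, (j = k - 3 ∨ j = k - 2 ∨ j = k - 1 ∨ j = k) →
          f' (x (j + 1)) + ContinuousLinearMap.adjoint A (p j)
            + α • ContinuousLinearMap.adjoint A (A (x (j + 1)) - B (y (j + 1)))
            + φ' (x (j + 1)) - φ' (x j) = 0) →
        (∀ j, (j = k - 3 ∨ j = k - 2 ∨ j = k - 1 ∨ j = k) →
          p (j + 1) = p j + α • (A (x (j + 1)) - B (y (j + 1)))) →
        ‖y k - y (k + 1)‖ ≤
          κ₂ * (‖x k - x (k + 1)‖ + ‖x k - x (k - 1)‖ + ‖x (k - 1) - x (k - 2)‖) := by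
  have hc₀ : 0 < √μ₀ := Real.sqrt_pos.2 hμ₀
  have hcB : 0 < √μB := Real.sqrt_pos.2 hμB
  set κ := (α * √μ₀ * ‖A‖ + ℓf + 2 * ℓφ) / (α * √μ₀ * √μB)
  refine ⟨κ + 1, by positivity, fun x y p k hk hstat hdual ↦ ?_⟩
  obtain ⟨i, rfl⟩ : ∃ i, k = i + 2 := ⟨k - 2, by omega⟩
  have hy := badmm_norm_y_sub_le (M := ContinuousLinearMap.adjoint A) (i := i)
    (fun q ↦ sqrt_mul_le_of_mul_sq_le (norm_nonneg _) (hA q))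
    (fun v ↦ sqrt_mul_le_of_mul_sq_le (norm_nonneg _) (hB v)) hc₀ hcB hα hℓf hℓφ hf' hφ'
    (fun j h₁ h₂ ↦ hstat j (by omega)) (fun j h₁ h₂ ↦ hdual j (by omega))
  simp only [show i + 2 + 1 = i + 3 by omega, show i + 2 - 1 = i + 1 by omega,
    show i + 2 - 2 = i by omega]
  exact hy.trans (by gcongr; linarith)

theorem badmm_y_diff_bound {n₁ n₂ m : ℕ} (hn₁ : 0 < n₁) (hn₂ : 0 < n₂) (hm : 0 < m)
    (A : EuclideanSpace ℝ (Fin n₁) →L[ℝ] EuclideanSpace ℝ (Fin m))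
    (B : EuclideanSpace ℝ (Fin n₂) →L[ℝ] EuclideanSpace ℝ (Fin m))
    (f φ : EuclideanSpace ℝ (Fin n₁) → ℝ)
    (f' φ' : EuclideanSpace ℝ (Fin n₁) → EuclideanSpace ℝ (Fin n₁))
    (hf : ∀ u, HasGradientAt f (f' u) u) (hφ : ∀ u, HasGradientAt φ (φ' u) u)
    (ℓf ℓφ : ℝ) (hℓf : 0 ≤ ℓf) (hℓφ : 0 ≤ ℓφ)
    (hf' : ∀ u v, ‖f' u - f' v‖ ≤ ℓf * ‖u - v‖)
    (hφ' : ∀ u v, ‖φ' u - φ' v‖ ≤ ℓφ * ‖u - v‖)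
    (α μ₀ μB : ℝ) (hα : 0 < α) (hμ₀ : 0 < μ₀) (hμB : 0 < μB)
    (hA : ∀ q : EuclideanSpace ℝ (Fin m),
      μ₀ * ‖q‖ ^ 2 ≤ ‖ContinuousLinearMap.adjoint A q‖ ^ 2)
    (hB : ∀ v : EuclideanSpace ℝ (Fin n₂), μB * ‖v‖ ^ 2 ≤ ‖B v‖ ^ 2) :
    ∃ κ₂ > (0 : ℝ),
      ∀ (x : ℕ → EuclideanSpace ℝ (Fin n₁)) (y : ℕ → EuclideanSpace ℝ (Fin n₂))
        (p : ℕ → EuclideanSpace ℝ (Fin m)) (k : ℕ), 3 ≤ k →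
        (∀ j, (j = k - 3 ∨ j = k - 2 ∨ j = k - 1 ∨ j = k) →
          f' (x (j + 1)) + ContinuousLinearMap.adjoint A (p j)
            + α • ContinuousLinearMap.adjoint A (A (x (j + 1)) - B (y (j + 1)))
            + φ' (x (j + 1)) - φ' (x j) = 0) →
        (∀ j, (j = k - 3 ∨ j = k - 2 ∨ j = k - 1 ∨ j = k) →
          p (j + 1) = p j + α • (A (x (j + 1)) - B (y (j + 1)))) →
        ‖y k - y (k + 1)‖ ≤
          κ₂ * (‖x k - x (k + 1)‖ + ‖x k - x (k - 1)‖ + ‖x (k - 1) - x (k - 2)‖) :=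
  badmm_y_diff_bound_general A B f' φ' ℓf ℓφ hℓf hℓφ hf' hφ' α μ₀ μB hα hμ₀ hμB hA hB
end

section
/- (x-component of Lemma III.3) Suppose the x-stationarity condition together with the dual update holds at step k, and let σ₀ > 0. Then ‖∇f(x^{k+1}) + A^⊤p^{k+1} + αA^⊤(Ax^{k+1} − By^{k+1}) + σ₀(x^{k+1} − x^k)‖ ≤ (ℓ_φ + σ₀)‖x^{k+1} − x^k‖ + ‖A‖·‖p^{k+1} − p^k‖, where ‖A‖ is the operator norm of A (equivalently, of A^⊤). -/
open scoped InnerProductSpace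

/-! Substituting the dual update into the x-stationarity condition turns the residual into
`(∇φ(xᵏ) − ∇φ(xᵏ⁺¹)) + A^⊤(pᵏ⁺¹ − pᵏ) + σ₀(xᵏ⁺¹ − xᵏ)`; the triangle inequality, the Lipschitz
bound on `∇φ` and `‖A^⊤‖ = ‖A‖` bound the three terms. -/

namespace ContinuousLinearMap

variable {E F : Type*} [NormedAddCommGroup E] [InnerProductSpace ℝ E] [CompleteSpace E]
  [NormedAddCommGroup F] [InnerProductSpace ℝ F] [CompleteSpace F]

theorem norm_adjoint_apply_le (A : E →L[ℝ] F) (v : F) : ‖adjoint A v‖ ≤ ‖A‖ * ‖v‖ := by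
  simpa only [LinearIsometryEquiv.norm_map] using (adjoint A).le_opNorm v

theorem add_adjoint_eq_of_stationary_of_dual_update (A : E →L[ℝ] F) {g a b : E} {q q' r : F}
    {α : ℝ} (hstat : g + adjoint A q + α • adjoint A r + a - b = 0) (hdual : q' = q + α • r) :
    g + adjoint A q' + α • adjoint A r = (b - a) + adjoint A (q' - q) := by
  subst hdual
  simp only [map_add, map_smul, add_sub_cancel_left]
  linear_combination (norm := module) hstat

theorem norm_add_adjoint_add_smul_le (A : E →L[ℝ] F) (e d : E) (w : F) {σ : ℝ} (hσ : 0 ≤ σ) :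
    ‖e + adjoint A w + σ • d‖ ≤ ‖e‖ + ‖A‖ * ‖w‖ + σ * ‖d‖ := by
  calc ‖e + adjoint A w + σ • d‖ ≤ ‖e‖ + ‖adjoint A w‖ + ‖σ • d‖ := norm_add₃_le
    _ ≤ ‖e‖ + ‖A‖ * ‖w‖ + σ * ‖d‖ := by
      rw [norm_smul, Real.norm_of_nonneg hσ]
      gcongr
      exact norm_adjoint_apply_le A w

end ContinuousLinearMap

theorem badmm_x_subgrad_bound_general {n₁ n₂ m : ℕ}
    (A : EuclideanSpace ℝ (Fin n₁) →L[ℝ] EuclideanSpace ℝ (Fin m))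
    (B : EuclideanSpace ℝ (Fin n₂) →L[ℝ] EuclideanSpace ℝ (Fin m))
    (f' φ' : EuclideanSpace ℝ (Fin n₁) → EuclideanSpace ℝ (Fin n₁))
    (ℓφ : ℝ)
    (hφ' : ∀ u v, ‖φ' u - φ' v‖ ≤ ℓφ * ‖u - v‖)
    (α : ℝ)
    (x : ℕ → EuclideanSpace ℝ (Fin n₁)) (y : ℕ → EuclideanSpace ℝ (Fin n₂))
    (p : ℕ → EuclideanSpace ℝ (Fin m)) (k : ℕ)
    (hstat : f' (x (k + 1)) + ContinuousLinearMap.adjoint A (p k)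
        + α • ContinuousLinearMap.adjoint A (A (x (k + 1)) - B (y (k + 1)))
        + φ' (x (k + 1)) - φ' (x k) = 0)
    (hdual : p (k + 1) = p k + α • (A (x (k + 1)) - B (y (k + 1))))
    (σ₀ : ℝ) (hσ₀ : 0 < σ₀) :
    ‖f' (x (k + 1)) + ContinuousLinearMap.adjoint A (p (k + 1))
        + α • ContinuousLinearMap.adjoint A (A (x (k + 1)) - B (y (k + 1)))
        + σ₀ • (x (k + 1) - x k)‖ ≤
      (ℓφ + σ₀) * ‖x (k + 1) - x k‖ + ‖A‖ * ‖p (k + 1) - p k‖ := by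
  rw [A.add_adjoint_eq_of_stationary_of_dual_update hstat hdual]
  have hlip : ‖φ' (x k) - φ' (x (k + 1))‖ ≤ ℓφ * ‖x (k + 1) - x k‖ := by
    simpa only [norm_sub_rev (x k)] using hφ' (x k) (x (k + 1))
  calc _ ≤ ‖φ' (x k) - φ' (x (k + 1))‖ + ‖A‖ * ‖p (k + 1) - p k‖ + σ₀ * ‖x (k + 1) - x k‖ :=
        A.norm_add_adjoint_add_smul_le _ _ _ hσ₀.le
    _ ≤ _ := by linarith

theorem badmm_x_subgrad_bound {n₁ n₂ m : ℕ} (hn₁ : 0 < n₁) (hn₂ : 0 < n₂) (hm : 0 < m)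
    (A : EuclideanSpace ℝ (Fin n₁) →L[ℝ] EuclideanSpace ℝ (Fin m))
    (B : EuclideanSpace ℝ (Fin n₂) →L[ℝ] EuclideanSpace ℝ (Fin m))
    (f φ : EuclideanSpace ℝ (Fin n₁) → ℝ)
    (f' φ' : EuclideanSpace ℝ (Fin n₁) → EuclideanSpace ℝ (Fin n₁))
    (hf : ∀ u, HasGradientAt f (f' u) u) (hφ : ∀ u, HasGradientAt φ (φ' u) u)
    (ℓφ : ℝ) (hℓφ : 0 ≤ ℓφ)
    (hφ' : ∀ u v, ‖φ' u - φ' v‖ ≤ ℓφ * ‖u - v‖)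
    (α : ℝ) (hα : 0 < α)
    (x : ℕ → EuclideanSpace ℝ (Fin n₁)) (y : ℕ → EuclideanSpace ℝ (Fin n₂))
    (p : ℕ → EuclideanSpace ℝ (Fin m)) (k : ℕ)
    (hstat : f' (x (k + 1)) + ContinuousLinearMap.adjoint A (p k)
        + α • ContinuousLinearMap.adjoint A (A (x (k + 1)) - B (y (k + 1)))
        + φ' (x (k + 1)) - φ' (x k) = 0)
    (hdual : p (k + 1) = p k + α • (A (x (k + 1)) - B (y (k + 1))))
    (σ₀ : ℝ) (hσ₀ : 0 < σ₀) :
    ‖f' (x (k + 1)) + ContinuousLinearMap.adjoint A (p (k + 1))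
        + α • ContinuousLinearMap.adjoint A (A (x (k + 1)) - B (y (k + 1)))
        + σ₀ • (x (k + 1) - x k)‖ ≤
      (ℓφ + σ₀) * ‖x (k + 1) - x k‖ + ‖A‖ * ‖p (k + 1) - p k‖ :=
  badmm_x_subgrad_bound_general A B f' φ' ℓφ hφ' α x y p k hstat hdual σ₀ hσ₀
end

section
/- (Kurdyka–Łojasiewicz finite-length argument, engine of Theorem III.4) Let (L_k)_{k≥0} be a nonincreasing real sequence converging to L* with L_k > L* for all k, let (a_k)_{k≥0} be nonnegative reals, let σ₁ > 0, κ > 0, η > 0, and let φ : [0, η] → ℝ be continuous with φ(0) = 0, differentiable and concave on (0, η) with φ′ > 0 on (0, η). Assume: (i) σ₁a_k² ≤ L_k − L_{k+1} for all k; and (ii) there exists k₁ ≥ 3 such that for all k ≥ k₁, L_k − L* < η and κ·φ′(L_k − L*)·(a_{k−1} + a_{k−2} + a_{k−3}) ≥ 1. Then ∑_{k=0}^∞ a_k < ∞. -/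
/-!
Write `x k = L k - Lstar`. Along the tail, concavity of `φ` turns the descent inequality into
`σ₁ a_k² φ'(x_k) ≤ φ(x_k) - φ(x_{k+1})`; multiplying by the KL inequality and applying AM–GM gives
`a_k ≤ (a_{k-1} + a_{k-2} + a_{k-3}) / 6 + C (φ(x_k) - φ(x_{k+1}))`.
Then `C φ(x_k) + a_{k-1} / 2 + a_{k-2} / 3 + a_{k-3} / 6` is nonnegative (as `φ ≥ 0`) and decreases
by at least `a_k / 2` at every step, which bounds the partial sums of `a`.
-/

open Finset Set

theorem ConcaveOn.le_add_mul_sub_of_hasDerivAt {S : Set ℝ} {f : ℝ → ℝ} {f' x y : ℝ}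
    (hf : ConcaveOn ℝ S f) (hx : x ∈ S) (hy : y ∈ S) (hf' : HasDerivAt f f' x) :
    f y ≤ f x + f' * (y - x) := by
  rcases lt_trichotomy x y with hxy | rfl | hxy
  · have h := hf.slope_le_of_hasDerivAt hx hy hxy hf'
    rw [slope_def_field, div_le_iff₀ (sub_pos.2 hxy)] at h
    linarith
  · simp
  · have h := hf.le_slope_of_hasDerivAt hy hx hxy hf'
    rw [slope_def_field, le_div_iff₀ (sub_pos.2 hxy)] at h
    linarith

theorem nonneg_of_hasDerivAt_nonneg_of_map_zero {φ φ' : ℝ → ℝ} {η t : ℝ}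
    (hcont : ContinuousOn φ (Icc 0 η)) (h0 : φ 0 = 0)
    (hderiv : ∀ s ∈ Ioo 0 η, HasDerivAt φ (φ' s) s) (hnonneg : ∀ s ∈ Ioo 0 η, 0 ≤ φ' s)
    (ht : t ∈ Icc 0 η) : 0 ≤ φ t := by
  have hmono : MonotoneOn φ (Icc 0 η) :=
    monotoneOn_of_hasDerivWithinAt_nonneg (convex_Icc 0 η) hcont
      (by simpa only [interior_Icc] using fun s hs => (hderiv s hs).hasDerivWithinAt)
      (by simpa only [interior_Icc] using hnonneg)
  exact h0 ▸ hmono (left_mem_Icc.2 (ht.1.trans ht.2)) ht ht.1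

theorem le_div_six_add_of_descent_of_kl {a b δ p σ κ : ℝ} (hσ : 0 < σ) (hκ : 0 < κ)
    (hb : 0 ≤ b) (hp : 0 ≤ p) (hdescent : p * (σ * a ^ 2) ≤ δ) (hkl : 1 ≤ κ * p * b) :
    a ≤ b / 6 + 3 * κ / (2 * σ) * δ := by
  have hδ : 0 ≤ δ := le_trans (by positivity) hdescent
  have hsq : σ * a ^ 2 ≤ κ * b * δ :=
    calc σ * a ^ 2 ≤ σ * a ^ 2 * (κ * p * b) := le_mul_of_one_le_right (by positivity) hkl
      _ = κ * b * (p * (σ * a ^ 2)) := by ring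
      _ ≤ κ * b * δ := by gcongr
  -- AM–GM with the weights `b / 3` and `3 κ δ / σ`, whose product is `κ b δ / σ`
  have hamgm := two_mul_le_add_of_sq_le_mul (r := a) (a := b / 3) (b := 3 * κ * δ / σ)
    (by positivity) (by positivity)
    (by rw [show b / 3 * (3 * κ * δ / σ) = κ * b * δ / σ by ring, le_div_iff₀ hσ]; linarith)
  have hhalf : 3 * κ * δ / σ = 2 * (3 * κ / (2 * σ) * δ) := by field_simp
  linarith

theorem summable_of_le_sub_succ {f V : ℕ → ℝ} (hf : ∀ k, 0 ≤ f k) (hV : ∀ k, 0 ≤ V k)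
    (h : ∀ k, f k ≤ V k - V (k + 1)) : Summable f :=
  summable_of_sum_range_le hf fun n =>
    calc ∑ k ∈ range n, f k ≤ ∑ k ∈ range n, (V k - V (k + 1)) := sum_le_sum fun k _ => h k
      _ = V 0 - V n := sum_range_sub' V n
      _ ≤ V 0 := sub_le_self _ (hV n)

theorem summable_of_le_mul_prev_three_add_sub {a Δ : ℕ → ℝ} {c : ℝ} {k₀ : ℕ} (hk₀ : 3 ≤ k₀)
    (hc : 0 ≤ c) (hc3 : 3 * c < 1) (ha : ∀ k, 0 ≤ a k) (hΔ : ∀ k, k₀ ≤ k → 0 ≤ Δ k)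
    (h : ∀ k, k₀ ≤ k → a k ≤ c * (a (k - 1) + a (k - 2) + a (k - 3)) + (Δ k - Δ (k + 1))) :
    Summable a := by
  -- the weights `3c, 2c, c` make the `a (k - i)` terms of `h` telescope
  let V : ℕ → ℝ := fun k =>
    Δ (k + k₀) + 3 * c * a (k + k₀ - 1) + 2 * c * a (k + k₀ - 2) + c * a (k + k₀ - 3)
  have hV : ∀ k, 0 ≤ V k := fun k => by
    have := hΔ (k + k₀) (by omega)
    have := ha (k + k₀ - 1); have := ha (k + k₀ - 2); have := ha (k + k₀ - 3)
    positivity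
  have hdrop : ∀ k, (1 - 3 * c) * a (k + k₀) ≤ V k - V (k + 1) := fun k => by
    have hk := h (k + k₀) (by omega)
    simp only [V]
    rw [show k + 1 + k₀ = k + k₀ + 1 by omega, show k + k₀ + 1 - 1 = k + k₀ by omega,
      show k + k₀ + 1 - 2 = k + k₀ - 1 by omega, show k + k₀ + 1 - 3 = k + k₀ - 2 by omega]
    linarith
  have hpos : 0 < 1 - 3 * c := by linarith
  have hsum := summable_of_le_sub_succ (fun k => mul_nonneg hpos.le (ha (k + k₀))) hV hdrop
  exact (summable_nat_add_iff k₀).mp ((hsum.mul_left (1 - 3 * c)⁻¹).congr fun k => by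
    rw [← mul_assoc, inv_mul_cancel₀ hpos.ne', one_mul])

theorem kl_finite_length_engine_III_4_general
    (L : ℕ → ℝ) (Lstar : ℝ)
    (hLgt : ∀ k, Lstar < L k)
    (a : ℕ → ℝ) (ha : ∀ k, 0 ≤ a k)
    (σ₁ κ η : ℝ) (hσ₁ : 0 < σ₁) (hκ : 0 < κ)
    (φ φ' : ℝ → ℝ)
    (hφcont : ContinuousOn φ (Set.Icc 0 η)) (hφ0 : φ 0 = 0)
    (hφderiv : ∀ t ∈ Set.Ioo (0 : ℝ) η, HasDerivAt φ (φ' t) t)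
    (hφconc : ConcaveOn ℝ (Set.Ioo 0 η) φ)
    (hφ'pos : ∀ t ∈ Set.Ioo (0 : ℝ) η, 0 < φ' t)
    (hdescent : ∀ k, σ₁ * a k ^ 2 ≤ L k - L (k + 1))
    (k₁ : ℕ) (hk₁ : 3 ≤ k₁)
    (hkl : ∀ k, k₁ ≤ k → L k - Lstar < η ∧
      1 ≤ κ * φ' (L k - Lstar) * (a (k - 1) + a (k - 2) + a (k - 3))) :
    Summable a := by
  have hmem : ∀ k, k₁ ≤ k → L k - Lstar ∈ Ioo 0 η := fun k hk =>
    ⟨sub_pos.2 (hLgt k), (hkl k hk).1⟩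
  have hφnonneg : ∀ k, k₁ ≤ k → 0 ≤ φ (L k - Lstar) := fun k hk =>
    nonneg_of_hasDerivAt_nonneg_of_map_zero hφcont hφ0 hφderiv (fun t ht => (hφ'pos t ht).le)
      (Ioo_subset_Icc_self (hmem k hk))
  refine summable_of_le_mul_prev_three_add_sub (c := 1 / 6)
    (Δ := fun k => 3 * κ / (2 * σ₁) * φ (L k - Lstar)) hk₁ (by norm_num) (by norm_num) ha
    (fun k hk => mul_nonneg (by positivity) (hφnonneg k hk)) fun k hk => ?_
  have hdec : φ' (L k - Lstar) * (σ₁ * a k ^ 2) ≤ φ (L k - Lstar) - φ (L (k + 1) - Lstar) := by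
    have htangent := hφconc.le_add_mul_sub_of_hasDerivAt (hmem k hk) (hmem (k + 1) (by omega))
      (hφderiv _ (hmem k hk))
    calc φ' (L k - Lstar) * (σ₁ * a k ^ 2)
        ≤ φ' (L k - Lstar) * ((L k - Lstar) - (L (k + 1) - Lstar)) :=
          mul_le_mul_of_nonneg_left (by linarith [hdescent k]) (hφ'pos _ (hmem k hk)).le
      _ ≤ φ (L k - Lstar) - φ (L (k + 1) - Lstar) := by linarith
  have hb : 0 ≤ a (k - 1) + a (k - 2) + a (k - 3) := by
    have := ha (k - 1); have := ha (k - 2); have := ha (k - 3); positivity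
  refine (le_div_six_add_of_descent_of_kl hσ₁ hκ hb (hφ'pos _ (hmem k hk)).le hdec
    (hkl k hk).2).trans_eq ?_
  ring

theorem kl_finite_length_engine_III_4
    (L : ℕ → ℝ) (Lstar : ℝ) (hLmono : ∀ k, L (k + 1) ≤ L k)
    (hLlim : Filter.Tendsto L Filter.atTop (nhds Lstar))
    (hLgt : ∀ k, Lstar < L k)
    (a : ℕ → ℝ) (ha : ∀ k, 0 ≤ a k)
    (σ₁ κ η : ℝ) (hσ₁ : 0 < σ₁) (hκ : 0 < κ) (hη : 0 < η)
    (φ φ' : ℝ → ℝ)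
    (hφcont : ContinuousOn φ (Set.Icc 0 η)) (hφ0 : φ 0 = 0)
    (hφderiv : ∀ t ∈ Set.Ioo (0 : ℝ) η, HasDerivAt φ (φ' t) t)
    (hφconc : ConcaveOn ℝ (Set.Ioo 0 η) φ)
    (hφ'pos : ∀ t ∈ Set.Ioo (0 : ℝ) η, 0 < φ' t)
    (hdescent : ∀ k, σ₁ * a k ^ 2 ≤ L k - L (k + 1))
    (k₁ : ℕ) (hk₁ : 3 ≤ k₁)
    (hkl : ∀ k, k₁ ≤ k → L k - Lstar < η ∧
      1 ≤ κ * φ' (L k - Lstar) * (a (k - 1) + a (k - 2) + a (k - 3))) :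
    Summable a :=
  kl_finite_length_engine_III_4_general L Lstar hLgt a ha σ₁ κ η hσ₁ hκ φ φ' hφcont hφ0 hφderiv
    hφconc hφ'pos hdescent k₁ hk₁ hkl
end

section
/- (Kurdyka–Łojasiewicz finite-length argument, engine of Theorem III.8) Let (L_k)_{k≥0} be a nonincreasing real sequence converging to L* with L_k > L* for all k, let (a_k)_{k≥0} and (b_k)_{k≥0} be nonnegative reals, let σ₁ > 0, κ > 0, η > 0, and let φ : [0, η] → ℝ be continuous with φ(0) = 0, differentiable and concave on (0, η) with φ′ > 0 on (0, η). Assume: (i) σ₁(a_k² + b_k²) ≤ L_k − L_{k+1} for all k; and (ii) there exists k₁ ≥ 2 such that for all k ≥ k₁, L_k − L* < η and κ·φ′(L_k − L*)·(a_{k−1} + b_{k−1} + a_{k−2}) ≥ 1. Then ∑_{k=0}^∞ (a_k + b_k) < ∞. -/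
/-!
Concavity of `φ` turns the descent `σ₁ (a_k² + b_k²) ≤ L_k - L_{k+1}` into
`σ₁ φ'(e_k) (a_k² + b_k²) ≤ φ(e_k) - φ(e_{k+1})` with `e_k = L_k - L*`, and the KL inequality
bounds `1 / φ'(e_k)` by `κ s_k`, where `s_k = a_{k-1} + b_{k-1} + a_{k-2}`. Hence
`(a_k + b_k)² ≤ s_k · (2κ/σ₁)(φ(e_k) - φ(e_{k+1}))`, and AM–GM gives
`a_k + b_k ≤ s_k / 4 + (2κ/σ₁)(φ(e_k) - φ(e_{k+1}))`. Summing, the right-hand side telescopes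
and `φ(e_k) ≥ φ(0) = 0`, while the two shifted copies of the partial sums carry total weight
`1/2 < 1`, so the partial sums of `a_k + b_k` stay bounded.
-/

open Finset Set

lemma ConcaveOn.hasDerivAt_mul_sub_le {S : Set ℝ} {f : ℝ → ℝ} {f' x y : ℝ}
    (hfc : ConcaveOn ℝ S f) (hx : x ∈ S) (hy : y ∈ S) (hxy : x ≤ y) (hf' : HasDerivAt f f' y) :
    f' * (y - x) ≤ f y - f x := by
  rcases hxy.eq_or_lt with rfl | hlt
  · simp
  · have hslope := hfc.le_slope_of_hasDerivAt hx hy hlt hf'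
    rwa [slope_def_field, le_div_iff₀ (sub_pos.2 hlt)] at hslope

lemma le_div_four_add_of_sq_le_mul {t s y : ℝ} (hs : 0 ≤ s) (hy : 0 ≤ y) (h : t ^ 2 ≤ s * y) :
    t ≤ s / 4 + y := by
  nlinarith [sq_nonneg (s / 4 - y), sq_nonneg (t - s / 4 - y)]

lemma add_le_of_descent_of_kl {σ κ p s α β δ Δ : ℝ} (hσ : 0 < σ) (hκ : 0 < κ) (hp : 0 < p)
    (hs : 0 ≤ s) (hdescent : σ * (α ^ 2 + β ^ 2) ≤ δ) (hconc : p * δ ≤ Δ)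
    (hkl : 1 ≤ κ * p * s) :
    α + β ≤ s / 4 + 2 * κ / σ * Δ := by
  have hδ : 0 ≤ δ := (by positivity : 0 ≤ σ * (α ^ 2 + β ^ 2)).trans hdescent
  have hΔ : 0 ≤ Δ := (mul_nonneg hp.le hδ).trans hconc
  refine le_div_four_add_of_sq_le_mul hs (by positivity) ?_
  have hsq : σ * (α + β) ^ 2 ≤ 2 * δ := by nlinarith [sq_nonneg (α - β)]
  have hΔs : σ * (α + β) ^ 2 ≤ 2 * κ * s * Δ := by
    nlinarith [mul_le_mul_of_nonneg_left hkl (mul_nonneg hσ.le (sq_nonneg (α + β))),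
      mul_le_mul_of_nonneg_left hsq (mul_nonneg hκ.le hs)]
  rw [show s * (2 * κ / σ * Δ) = 2 * κ * s * Δ / σ by ring, le_div_iff₀ hσ]
  linarith

lemma summable_of_le_mul_add_sub {u c : ℕ → ℝ} {θ : ℝ} (hθ₀ : 0 ≤ θ) (hθ : θ < 1 / 2)
    (hu : ∀ m, 0 ≤ u m) (hc : ∀ m, 0 ≤ c m)
    (h : ∀ m, u (m + 2) ≤ θ * (u (m + 1) + u m) + (c m - c (m + 1))) :
    Summable u := by
  set S : ℕ → ℝ := fun n => ∑ m ∈ range n, u m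
  have hS : Monotone S := fun m n hmn => sum_le_sum_of_subset_of_nonneg
    (range_subset_range.2 hmn) fun i _ _ => hu i
  refine summable_of_sum_range_le hu (c := (u 0 + u 1 + c 0) / (1 - 2 * θ)) fun n => ?_
  have hsum : S (n + 2) - u 0 - u 1 ≤ θ * (S (n + 1) - u 0 + S n) + (c 0 - c n) := by
    have hshift₁ : ∑ m ∈ range n, u (m + 1) = S (n + 1) - u 0 := by
      simp only [S, sum_range_succ' u n]; ring
    have hshift₂ : ∑ m ∈ range n, u (m + 2) = S (n + 2) - u 0 - u 1 := by
      simp only [S, sum_range_succ' u (n + 1), sum_range_succ' (fun m => u (m + 1)) n]; ring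
    have := sum_le_sum fun m (_ : m ∈ range n) => h m
    rwa [sum_add_distrib, ← mul_sum, sum_add_distrib, sum_range_sub', hshift₁, hshift₂] at this
  have hle : S n ≤ S (n + 2) := hS (by omega)
  have hle' : S (n + 1) ≤ S (n + 2) := hS (by omega)
  rw [le_div_iff₀ (by linarith)]
  nlinarith [hc n, hu 0, hu 1]

theorem kl_finite_length_engine_III_8_general
    (L : ℕ → ℝ) (Lstar : ℝ) (hLmono : ∀ k, L (k + 1) ≤ L k)
    (hLgt : ∀ k, Lstar < L k)
    (a b : ℕ → ℝ) (ha : ∀ k, 0 ≤ a k) (hb : ∀ k, 0 ≤ b k)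
    (σ₁ κ η : ℝ) (hσ₁ : 0 < σ₁) (hκ : 0 < κ) (hη : 0 < η)
    (φ φ' : ℝ → ℝ)
    (hφcont : ContinuousOn φ (Set.Icc 0 η)) (hφ0 : φ 0 = 0)
    (hφderiv : ∀ t ∈ Set.Ioo (0 : ℝ) η, HasDerivAt φ (φ' t) t)
    (hφconc : ConcaveOn ℝ (Set.Ioo 0 η) φ)
    (hφ'pos : ∀ t ∈ Set.Ioo (0 : ℝ) η, 0 < φ' t)
    (hdescent : ∀ k, σ₁ * (a k ^ 2 + b k ^ 2) ≤ L k - L (k + 1))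
    (k₁ : ℕ) (hk₁ : 2 ≤ k₁)
    (hkl : ∀ k, k₁ ≤ k → L k - Lstar < η ∧
      1 ≤ κ * φ' (L k - Lstar) * (a (k - 1) + b (k - 1) + a (k - 2))) :
    Summable (fun k => a k + b k) := by
  have he : ∀ k, k₁ ≤ k → L k - Lstar ∈ Ioo 0 η := fun k hk =>
    ⟨sub_pos.2 (hLgt k), (hkl k hk).1⟩
  have hφnonneg : ∀ k, k₁ ≤ k → 0 ≤ φ (L k - Lstar) := by
    have hφmono : MonotoneOn φ (Icc 0 η) :=
      monotoneOn_of_hasDerivWithinAt_nonneg (convex_Icc 0 η) hφcont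
        (fun t ht => (hφderiv t (by rwa [interior_Icc] at ht)).hasDerivWithinAt)
        (fun t ht => (hφ'pos t (by rwa [interior_Icc] at ht)).le)
    intro k hk
    exact hφ0 ▸ hφmono (left_mem_Icc.2 hη.le) (Ioo_subset_Icc_self (he k hk)) (he k hk).1.le
  have hstep : ∀ k, k₁ ≤ k → a k + b k ≤ (a (k - 1) + b (k - 1) + a (k - 2)) / 4 +
      2 * κ / σ₁ * (φ (L k - Lstar) - φ (L (k + 1) - Lstar)) := by
    intro k hk
    have hek := he k hk
    have hek' := he (k + 1) (by omega)
    refine add_le_of_descent_of_kl hσ₁ hκ (hφ'pos _ hek)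
      (add_nonneg (add_nonneg (ha _) (hb _)) (ha _)) ?_
      (hφconc.hasDerivAt_mul_sub_le hek' hek (by linarith [hLmono k]) (hφderiv _ hek))
      (hkl k hk).2
    rw [sub_sub_sub_cancel_right]
    exact hdescent k
  obtain ⟨j, rfl⟩ : ∃ j, k₁ = j + 2 := ⟨k₁ - 2, by omega⟩
  refine (summable_nat_add_iff j).1 <| summable_of_le_mul_add_sub (θ := 1 / 4)
    (c := fun m => 2 * κ / σ₁ * φ (L (m + j + 2) - Lstar)) (by norm_num) (by norm_num)
    (fun m => add_nonneg (ha _) (hb _))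
    (fun m => mul_nonneg (by positivity) (hφnonneg _ (by omega))) fun m => ?_
  have := hstep (m + j + 2) (by omega)
  simp only [show m + j + 2 - 1 = m + 1 + j by omega, show m + j + 2 - 2 = m + j by omega,
    show m + 1 + j + 2 = m + j + 2 + 1 by omega, show m + 2 + j = m + j + 2 by omega] at this ⊢
  linarith [hb (m + j)]

theorem kl_finite_length_engine_III_8
    (L : ℕ → ℝ) (Lstar : ℝ) (hLmono : ∀ k, L (k + 1) ≤ L k)
    (hLlim : Filter.Tendsto L Filter.atTop (nhds Lstar))
    (hLgt : ∀ k, Lstar < L k)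
    (a b : ℕ → ℝ) (ha : ∀ k, 0 ≤ a k) (hb : ∀ k, 0 ≤ b k)
    (σ₁ κ η : ℝ) (hσ₁ : 0 < σ₁) (hκ : 0 < κ) (hη : 0 < η)
    (φ φ' : ℝ → ℝ)
    (hφcont : ContinuousOn φ (Set.Icc 0 η)) (hφ0 : φ 0 = 0)
    (hφderiv : ∀ t ∈ Set.Ioo (0 : ℝ) η, HasDerivAt φ (φ' t) t)
    (hφconc : ConcaveOn ℝ (Set.Ioo 0 η) φ)
    (hφ'pos : ∀ t ∈ Set.Ioo (0 : ℝ) η, 0 < φ' t)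
    (hdescent : ∀ k, σ₁ * (a k ^ 2 + b k ^ 2) ≤ L k - L (k + 1))
    (k₁ : ℕ) (hk₁ : 2 ≤ k₁)
    (hkl : ∀ k, k₁ ≤ k → L k - Lstar < η ∧
      1 ≤ κ * φ' (L k - Lstar) * (a (k - 1) + b (k - 1) + a (k - 2))) :
    Summable (fun k => a k + b k) :=
  kl_finite_length_engine_III_8_general L Lstar hLmono hLgt a b ha hb σ₁ κ η hσ₁ hκ hη φ φ' hφcont
    hφ0 hφderiv hφconc hφ'pos hdescent k₁ hk₁ hkl
end
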